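/- Let n1, n2, m1, m2 be finite index types, let A1 : Matrix n1 n1 ℝ and A2 : Matrix n2 n2 ℝ be invertible matrices, let B1 : Matrix n1 m1 ℝ, B2 : Matrix n2 m2 ℝ, R1 : Matrix m1 n2 ℝ, R2 : Matrix m2 n1 ℝ, E1 : Matrix n1 m1 ℝ, E2 : Matrix n2 m2 ℝ. Let M be the 4×4 block matrix with rows of blocks (A1, 0, B1, 0), (0, A2, 0, B2), (0, -R1, 1, -R1*E2), (-R2, 0, -R2*E1, 1), where 1 denotes the identity blocks on m1 and m2 respectively, and let Σ be the 2×2 block matrix with blocks (1, -R1*(E2 - A2⁻¹*B2); -R2*(E1 - A1⁻¹*B1), 1). Then M is invertible if and only if Σ is invertible. -/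
import Mathlib

open Matrix

/-- The coefficient matrix M of the discretized two-subdomain overlapping Schwarz
system is invertible if and only if the interface (Schur-complement-type) matrix Σ
is invertible. -/
theorem schwarz_matrix_isUnit_iff_interface_isUnit
    {n1 n2 m1 m2 : Type*} [Fintype n1] [Fintype n2] [Fintype m1] [Fintype m2]
    [DecidableEq n1] [DecidableEq n2] [DecidableEq m1] [DecidableEq m2]
    (A1 : Matrix n1 n1 ℝ) (A2 : Matrix n2 n2 ℝ) [Invertible A1] [Invertible A2]
    (B1 : Matrix n1 m1 ℝ) (B2 : Matrix n2 m2 ℝ)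
    (R1 : Matrix m1 n2 ℝ) (R2 : Matrix m2 n1 ℝ)
    (E1 : Matrix n1 m1 ℝ) (E2 : Matrix n2 m2 ℝ) :
    IsUnit (Matrix.fromBlocks
        (Matrix.fromBlocks A1 0 0 A2)
        (Matrix.fromBlocks B1 0 0 B2)
        (Matrix.fromBlocks 0 (-R1) (-R2) 0)
        (Matrix.fromBlocks (1 : Matrix m1 m1 ℝ) (-(R1 * E2))
          (-(R2 * E1)) (1 : Matrix m2 m2 ℝ))) ↔
    IsUnit (Matrix.fromBlocks (1 : Matrix m1 m1 ℝ) (-(R1 * (E2 - A2⁻¹ * B2)))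
        (-(R2 * (E1 - A1⁻¹ * B1))) (1 : Matrix m2 m2 ℝ)) := by
  letI : Invertible (Matrix.fromBlocks A1 0 0 A2) :=
    Matrix.fromBlocksZero₂₁Invertible A1 0 A2
  rw [Matrix.isUnit_fromBlocks_iff_of_invertible₁₁]
  have hinv : ⅟ (Matrix.fromBlocks A1 0 0 A2) =
      Matrix.fromBlocks (⅟ A1) 0 0 (⅟ A2) := by
    rw [Matrix.invOf_fromBlocks_zero₂₁_eq]
    simp
  rw [hinv]
  have key : Matrix.fromBlocks (1 : Matrix m1 m1 ℝ) (-(R1 * E2)) (-(R2 * E1)) 1 -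
      Matrix.fromBlocks 0 (-R1) (-R2) 0 * Matrix.fromBlocks (⅟ A1) 0 0 (⅟ A2) *
        Matrix.fromBlocks B1 0 0 B2 =
      Matrix.fromBlocks (1 : Matrix m1 m1 ℝ) (-(R1 * (E2 - A2⁻¹ * B2)))
        (-(R2 * (E1 - A1⁻¹ * B1))) 1 := by
    simp only [Matrix.fromBlocks_multiply, sub_eq_add_neg, Matrix.fromBlocks_neg,
      Matrix.fromBlocks_add]
    congr 1 <;>
      simp [invOf_eq_nonsing_inv, Matrix.mul_sub, Matrix.mul_assoc, Matrix.neg_mul,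
        sub_eq_add_neg, neg_add, Matrix.mul_add, Matrix.mul_neg, add_comm]
  rw [key]
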